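/- arXiv:math/0702315 — 4 statements merged into one kernel-verified Lean document; each statement's English description precedes it below -/
import Mathlib

section
/- Let A be a commutative noetherian regular domain of finite Krull dimension and let 1 ≤ p ≤ dim A. If the Grothendieck group K₀(M^p(A)) is generated by the classes [A/(f₁,…,f_p)] of cyclic modules where f₁,…,f_p ranges over regular sequences in A (such a quotient lies in M^p(A) since the ideal generated by a length-p regular sequence has height ≥ p), then the canonical homomorphism K₀(M^p(A)) → K₀(M^{p−1}(A)) induced by the inclusion M^p(A) ⊆ M^{p−1}(A) is the zero map. -/
open RingTheory

/-- A presentation of a finitely generated `A`-module: a number of generators `n`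
together with a submodule of relations in `A^n`.  Every finitely generated module over a
(noetherian) commutative ring is isomorphic to the module presented by such a datum. -/
def PModule (A : Type) [CommRing A] : Type := Σ n : ℕ, Submodule A (Fin n → A)

/-- The finitely generated module presented by a presentation. -/
abbrev PModule.Mdl {A : Type} [CommRing A] (o : PModule A) : Type := (Fin o.1 → A) ⧸ o.2

/-- Membership in the category `M^p(A)` of finitely generated modules all of whose
supporting primes have height `≥ p` (`Codim_{Spec A} Supp M ≥ p`). -/
def InCat (A : Type) [CommRing A] (p : ℕ) (M : Type) [AddCommGroup M] [Module A M] :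
    Prop :=
  ∀ P ∈ Module.support A M, (p : ℕ∞) ≤ Order.height P

theorem InCat.mono {A : Type} [CommRing A] {p q : ℕ} (h : q ≤ p) {M : Type}
    [AddCommGroup M] [Module A M] (hM : InCat A p M) : InCat A q M :=
  fun P hP => le_trans (Nat.cast_le.mpr h) (hM P hP)

/-- The generators of the Grothendieck group `K₀(M^p(A))`: (presented) objects
of `M^p(A)`. -/
def K0Gen (A : Type) [CommRing A] (p : ℕ) : Type :=
  {o : PModule A // InCat A p o.Mdl}

/-- The defining relations of `K₀(M^p(A))`: for every short exact sequence
`0 → M' → M → M'' → 0` in `M^p(A)`, the element `[M] - [M'] - [M'']`. -/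
def K0Rel (A : Type) [CommRing A] (p : ℕ) : Set (FreeAbelianGroup (K0Gen A p)) :=
  {x | ∃ (a b c : K0Gen A p) (f : a.1.Mdl →ₗ[A] b.1.Mdl) (g : b.1.Mdl →ₗ[A] c.1.Mdl),
    Function.Injective f ∧ Function.Surjective g ∧
    LinearMap.range f = LinearMap.ker g ∧
    x = FreeAbelianGroup.of b - FreeAbelianGroup.of a - FreeAbelianGroup.of c}

/-- The Grothendieck group `K₀(M^p(A))`: the free abelian group on the objects of
`M^p(A)` modulo the relations coming from short exact sequences (these relations also
identify isomorphic objects, via short exact sequences with zero third term). -/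
abbrev K0 (A : Type) [CommRing A] (p : ℕ) : Type :=
  FreeAbelianGroup (K0Gen A p) ⧸ AddSubgroup.closure (K0Rel A p)

/-- The class `[M]` in `K₀(M^p(A))` of an object `M` of `M^p(A)`. -/
def K0cls (A : Type) [CommRing A] (p : ℕ) (o : PModule A) (ho : InCat A p o.Mdl) :
    K0 A p :=
  QuotientAddGroup.mk (FreeAbelianGroup.of ⟨o, ho⟩)

/-- A commutative ring is regular local if it is noetherian local and its maximal ideal
is generated by `dim B` elements. -/
def IsRegularLocal (B : Type) [CommRing B] : Prop :=
  IsNoetherianRing B ∧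
    ∃ h : IsLocalRing B,
      ∃ s : Finset B, Ideal.span (s : Set B) = @IsLocalRing.maximalIdeal B _ h ∧
        (s.card : WithBot ℕ∞) = ringKrullDim B

/-!
Write `p = k + 1` and let `f₁, …, f_{k+1}` be a regular sequence. Its last element is a
nonzerodivisor on `M = A ⧸ (f₁, …, f_k)`, so `0 → M → M → A ⧸ (f₁, …, f_{k+1}) → 0`
(multiplication by `f_{k+1}`, then the projection) is exact. Every prime in the support of `M`
contains a weakly regular sequence of length `k` and so has height `≥ k`; thus the sequence lives
in `M^k(A)` and `[A ⧸ (f₁, …, f_{k+1})] = [M] - [M] = 0` in `K₀(M^k(A))`. Since these classes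
generate `K₀(M^{k+1}(A))`, its image in `K₀(M^k(A))` vanishes.
-/

namespace RingTheory.Sequence

theorem IsWeaklyRegular.length_le_height {R : Type*} [CommRing R] [IsNoetherianRing R]
    {rs : List R} (reg : IsWeaklyRegular R rs) (P : Ideal R) [P.IsPrime]
    (hP : ∀ r ∈ rs, r ∈ P) : (rs.length : ℕ∞) ≤ P.height := by
  -- In the local ring `Rₚ` the sequence is regular, and each element lowers the dimension by one.
  let Rₚ := Localization.AtPrime P
  have reg' := reg.isRegular_of_isLocalization_of_mem Rₚ P hP
  have hdim := ringKrullDim_add_length_eq_ringKrullDim_of_isRegular _ reg'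
  rw [List.length_map, IsLocalization.AtPrime.ringKrullDim_eq_height P Rₚ] at hdim
  have : Nontrivial (Rₚ ⧸ Ideal.ofList (rs.map (algebraMap R Rₚ))) :=
    Ideal.Quotient.nontrivial_iff.mpr <| by
      simpa only [smul_eq_mul, Ideal.mul_top] using reg'.top_ne_smul.symm
  have hle := hdim ▸ le_add_of_nonneg_left (a := (rs.length : WithBot ℕ∞))
    ringKrullDim_nonneg_of_nontrivial
  exact_mod_cast hle

end RingTheory.Sequence

section

variable {A : Type} [CommRing A]

theorem InCat.of_linearEquiv {p : ℕ} {M N : Type} [AddCommGroup M] [Module A M]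
    [AddCommGroup N] [Module A N] (e : M ≃ₗ[A] N) (hN : InCat A p N) : InCat A p M :=
  fun P hP => hN P (e.support_eq ▸ hP)

theorem inCat_quotient_ofList_smul_top [IsNoetherianRing A] {rs : List A}
    (reg : Sequence.IsWeaklyRegular A rs) :
    InCat A rs.length (A ⧸ (Ideal.ofList rs • ⊤ : Submodule A A)) := by
  intro P hP
  rw [Module.support_quotient] at hP
  rw [← P.height_eq_orderHeight]
  exact reg.length_le_height P.asIdeal fun r hr => hP.2 (Ideal.subset_span hr)

namespace PModule

noncomputable def quotient (I : Ideal A) : PModule A :=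
  ⟨1, Submodule.comap (LinearEquiv.funUnique (Fin 1) A A).toLinearMap I⟩

noncomputable def quotientEquiv (I : Ideal A) : (quotient I).Mdl ≃ₗ[A] A ⧸ I :=
  Submodule.Quotient.equiv _ I (LinearEquiv.funUnique (Fin 1) A A)
    (Submodule.map_comap_eq_of_surjective (LinearEquiv.funUnique (Fin 1) A A).surjective I)

end PModule

namespace K0

noncomputable def ofLE {p q : ℕ} (h : q ≤ p) : K0 A p →+ K0 A q :=
  QuotientAddGroup.map _ _ (FreeAbelianGroup.map fun x => ⟨x.1, x.2.mono h⟩) <| by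
    rw [AddSubgroup.closure_le]
    rintro _ ⟨a, b, c, f, g, hf, hg, hfg, rfl⟩
    refine AddSubgroup.subset_closure ⟨⟨a.1, a.2.mono h⟩, ⟨b.1, b.2.mono h⟩, ⟨c.1, c.2.mono h⟩,
      f, g, hf, hg, hfg, ?_⟩
    simp only [map_sub]
    rfl

theorem ofLE_cls {p q : ℕ} (h : q ≤ p) (o : PModule A) (ho : InCat A p o.Mdl) :
    ofLE h (K0cls A p o ho) = K0cls A q o (ho.mono h) :=
  rfl

end K0

theorem K0cls_eq_add_of_exact {p : ℕ} {a b c : PModule A} (ha : InCat A p a.Mdl)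
    (hb : InCat A p b.Mdl) (hc : InCat A p c.Mdl) {M₁ M₂ M₃ : Type}
    [AddCommGroup M₁] [Module A M₁] [AddCommGroup M₂] [Module A M₂]
    [AddCommGroup M₃] [Module A M₃] (e₁ : a.Mdl ≃ₗ[A] M₁) (e₂ : b.Mdl ≃ₗ[A] M₂)
    (e₃ : c.Mdl ≃ₗ[A] M₃) {f : M₁ →ₗ[A] M₂} {g : M₂ →ₗ[A] M₃}
    (hf : Function.Injective f) (hg : Function.Surjective g) (hfg : Function.Exact f g) :
    K0cls A p b hb = K0cls A p a ha + K0cls A p c hc := by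
  let f' := e₂.symm.toLinearMap ∘ₗ f ∘ₗ e₁.toLinearMap
  let g' := e₃.symm.toLinearMap ∘ₗ g ∘ₗ e₂.toLinearMap
  have hfg' : Function.Exact f' g' :=
    hfg.of_ladder_linearEquiv_of_exact (e₁ := e₁.symm) (e₂ := e₂.symm) (e₃ := e₃.symm)
      (by ext; simp [f']) (by ext; simp [g'])
  have hrel : FreeAbelianGroup.of ⟨b, hb⟩ - FreeAbelianGroup.of ⟨a, ha⟩ -
      FreeAbelianGroup.of ⟨c, hc⟩ ∈ K0Rel A p :=
    ⟨⟨a, ha⟩, ⟨b, hb⟩, ⟨c, hc⟩, f', g', by simpa [f'] using hf, by simpa [g'] using hg,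
      (LinearMap.exact_iff.mp hfg').symm, rfl⟩
  rw [← sub_eq_zero, ← sub_sub]
  exact (QuotientAddGroup.eq_zero_iff _).mpr (AddSubgroup.subset_closure hrel)

theorem K0cls_eq_zero_of_isSMulRegular {p : ℕ} {a c : PModule A} (ha : InCat A p a.Mdl)
    (hc : InCat A p c.Mdl) {M : Type} [AddCommGroup M] [Module A M] (e : a.Mdl ≃ₗ[A] M)
    {x : A} (hx : IsSMulRegular M x) (e' : c.Mdl ≃ₗ[A] QuotSMulTop x M) :
    K0cls A p c hc = 0 := by
  have hadd := K0cls_eq_add_of_exact ha ha hc e e e' (f := LinearMap.lsmul A M x) hx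
    (Submodule.mkQ_surjective _) (LinearMap.exact_lsmul_mkQ_smul_top M x)
  simpa using hadd

theorem K0cls_eq_zero_of_isWeaklyRegular [IsNoetherianRing A] {k : ℕ} {f : Fin (k + 1) → A}
    (hf : Sequence.IsWeaklyRegular A (List.ofFn f)) {o : PModule A}
    (ho : InCat A k o.Mdl) (e : o.Mdl ≃ₗ[A] A ⧸ Ideal.span (Set.range f)) :
    K0cls A k o ho = 0 := by
  set rs := List.ofFn (Fin.init f)
  set x := f (Fin.last k)
  have hsplit : List.ofFn f = rs ++ [x] := by rw [List.ofFn_succ', List.concat_eq_append]; rfl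
  rw [hsplit, Sequence.isWeaklyRegular_append_iff, Sequence.isWeaklyRegular_singleton_iff] at hf
  obtain ⟨hrs, hx⟩ := hf
  have hspan : Ideal.span (Set.range f) = (Ideal.ofList (x :: rs) • ⊤ : Submodule A A) := by
    rw [smul_eq_mul, Ideal.mul_top]
    congr 1
    ext r
    change r ∈ Set.range f ↔ r ∈ x :: rs
    rw [← List.mem_ofFn', hsplit, List.mem_append, List.mem_singleton, List.mem_cons, or_comm]
  have ha := (inCat_quotient_ofList_smul_top hrs).of_linearEquiv (PModule.quotientEquiv _)
  rw [List.length_ofFn] at ha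
  exact K0cls_eq_zero_of_isSMulRegular ha ho (PModule.quotientEquiv _) hx
    (e ≪≫ₗ Submodule.quotEquivOfEq _ _ hspan ≪≫ₗ
      Submodule.quotOfListConsSMulTopEquivQuotSMulTopOuter A x rs)

end

theorem stmt4_general (A : Type) [CommRing A] [IsNoetherianRing A]
    (p : ℕ) (hp : 1 ≤ p)
    (hgen : AddSubgroup.closure
        {x : K0 A p | ∃ f : Fin p → A, Sequence.IsRegular A (List.ofFn f) ∧
          ∃ (o : PModule A) (ho : InCat A p o.Mdl),
            Nonempty (o.Mdl ≃ₗ[A] A ⧸ Ideal.span (Set.range f)) ∧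
            x = K0cls A p o ho} = ⊤) :
    ∀ (o : PModule A) (ho : InCat A p o.Mdl),
      K0cls A (p - 1) o (ho.mono (Nat.sub_le p 1)) = 0 := by
  obtain ⟨k, rfl⟩ : ∃ k, p = k + 1 := ⟨p - 1, by omega⟩
  have hker : ⊤ ≤ (K0.ofLE (A := A) (Nat.sub_le (k + 1) 1)).ker := by
    rw [← hgen, AddSubgroup.closure_le]
    rintro _ ⟨f, hf, o, ho, ⟨e⟩, rfl⟩
    exact K0cls_eq_zero_of_isWeaklyRegular hf.toIsWeaklyRegular _ e
  intro o ho
  rw [← K0.ofLE_cls _ o ho]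
  exact hker (AddSubgroup.mem_top _)

/-- Let `A` be a commutative noetherian regular domain of finite Krull
dimension and `1 ≤ p ≤ dim A`.  If `K₀(M^p(A))` is generated by the classes of cyclic
modules `A/(f₁,…,f_p)` for regular sequences `f₁,…,f_p`, then the canonical map
`K₀(M^p(A)) → K₀(M^{p-1}(A))` (sending `[M]` to `[M]`) is zero. -/
theorem stmt4 (A : Type) [CommRing A] [IsDomain A] [IsNoetherianRing A]
    (hreg : ∀ P : Ideal A, ∀ _ : P.IsPrime, IsRegularLocal (Localization.AtPrime P))
    (hfin : ∃ d : ℕ, ringKrullDim A = d)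
    (p : ℕ) (hp : 1 ≤ p) (hpdim : (p : WithBot ℕ∞) ≤ ringKrullDim A)
    (hgen : AddSubgroup.closure
        {x : K0 A p | ∃ f : Fin p → A, Sequence.IsRegular A (List.ofFn f) ∧
          ∃ (o : PModule A) (ho : InCat A p o.Mdl),
            Nonempty (o.Mdl ≃ₗ[A] A ⧸ Ideal.span (Set.range f)) ∧
            x = K0cls A p o ho} = ⊤) :
    ∀ (o : PModule A) (ho : InCat A p o.Mdl),
      K0cls A (p - 1) o (ho.mono (Nat.sub_le p 1)) = 0 :=
  stmt4_general A p hp hgen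
end

section
/- Let I and J be small categories and X a small category with equivalence relations. Define A : LAX(I, LAX(J, X)) → LAX(I × J, X) by A(f)(i, j) = f(i)(j), A(f)(a, b) = f(a)(j₂)∘f(i₁)(b) for (a, b) : (i₁, j₁) → (i₂, j₂), and A(x)(i, j) = x(i)(j) on deformations; define B : LAX(I × J, X) → LAX(I, LAX(J, X)) by B(f)(i)(j) = f(i, j), B(f)(a)(j) = f(a, id_j), B(f)(i)(b) = f(id_i, b), and B(x)(i)(j) = x(i, j) on deformations. Then A and B are well defined, are functors preserving the (pointwise) equivalence relations, B∘A is the identity of LAX(I, LAX(J, X)), and the families of identity morphisms define a deformation Θ : A∘B ⇒ id of endofunctors of LAX(I × J, X) which is relative to objects (i.e. A(B(f))(i, j) = f(i, j) for every lax functor f and every object (i, j), each component of Θ is an identity, and A(B(f))(a, b) ~ f(a, b) for every morphism (a, b)). -/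
open CategoryTheory

/-- A category with equivalence relations. -/
class CatER (X : Type*) [Category X] where
  rel : ∀ {A B : X}, (A ⟶ B) → (A ⟶ B) → Prop
  equiv : ∀ {A B : X}, Equivalence (fun f g : A ⟶ B => rel f g)
  comp_left : ∀ {A B C : X} (a : A ⟶ B) {x y : B ⟶ C}, rel x y → rel (a ≫ x) (a ≫ y)
  comp_right : ∀ {A B C : X} {x y : A ⟶ B} (b : B ⟶ C), rel x y → rel (x ≫ b) (y ≫ b)

/-- A lax functor from an ordinary category to a category with equivalence relations. -/
structure LaxFunctor (I : Type*) [Category I] (X : Type*) [Category X] [CatER X] where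
  obj : I → X
  map : ∀ {i j : I}, (i ⟶ j) → (obj i ⟶ obj j)
  map_id : ∀ i : I, map (𝟙 i) = 𝟙 (obj i)
  map_comp : ∀ {i j k : I} (a : i ⟶ j) (b : j ⟶ k),
    CatER.rel (map (a ≫ b)) (map a ≫ map b)

/-- A (lax) deformation between lax functors. -/
structure Deformation {I : Type*} [Category I] {X : Type*} [Category X] [CatER X]
    (x y : LaxFunctor I X) where
  app : ∀ i : I, x.obj i ⟶ y.obj i
  natural : ∀ {i j : I} (a : i ⟶ j), CatER.rel (x.map a ≫ app j) (app i ≫ y.map a)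

namespace Deformation

variable {I : Type*} [Category I] {X : Type*} [Category X] [CatER X]

theorem ext' : ∀ {x y : LaxFunctor I X} {f g : Deformation x y},
    (∀ i, f.app i = g.app i) → f = g
  | _, _, ⟨a, _⟩, ⟨b, _⟩, h => by
    obtain rfl : a = b := funext h
    rfl

/-- The identity deformation. -/
def id (x : LaxFunctor I X) : Deformation x x where
  app i := 𝟙 (x.obj i)
  natural a := by simpa using CatER.equiv.refl (x.map a)

/-- Pointwise composition of deformations. -/
def comp {x y z : LaxFunctor I X} (f : Deformation x y) (g : Deformation y z) :
    Deformation x z where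
  app i := f.app i ≫ g.app i
  natural {i j} a := by
    have h1 : CatER.rel ((x.map a ≫ f.app j) ≫ g.app j) ((f.app i ≫ y.map a) ≫ g.app j) :=
      CatER.comp_right _ (f.natural a)
    have h2 : CatER.rel (f.app i ≫ y.map a ≫ g.app j) (f.app i ≫ g.app i ≫ z.map a) :=
      CatER.comp_left _ (g.natural a)
    have h3 := CatER.equiv.trans (by simpa using h1) h2
    simpa using h3

end Deformation

/-- The category `LAX(I, X)` of lax functors and deformations. -/
instance LaxCat (I : Type*) [Category I] (X : Type*) [Category X] [CatER X] :
    Category (LaxFunctor I X) where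
  Hom := Deformation
  id := Deformation.id
  comp := Deformation.comp
  id_comp f := Deformation.ext' (fun i => Category.id_comp (f.app i))
  comp_id f := Deformation.ext' (fun i => Category.comp_id (f.app i))
  assoc f g h := Deformation.ext' (fun i => Category.assoc _ _ _)

/-- `LAX(I, X)` with the pointwise relation is a category with equivalence relations. -/
instance LaxCatER (I : Type*) [Category I] (X : Type*) [Category X] [CatER X] :
    CatER (LaxFunctor I X) where
  rel f g := ∀ i, CatER.rel (f.app i) (g.app i)
  equiv :=
    ⟨fun _ _ => CatER.equiv.refl _, fun h i => CatER.equiv.symm (h i),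
      fun h₁ h₂ i => CatER.equiv.trans (h₁ i) (h₂ i)⟩
  comp_left := fun {A B C} a {x y} h i => CatER.comp_left _ (h i)
  comp_right := fun {A B C} {x y} b h i => CatER.comp_right _ (h i)


/-!
`A(f)` is a lax functor because `f(a)` is a deformation: in `A(f)(a ≫ a', b ≫ b')` the middle
factors `f(i₂)(b') ∘ f(a)(j₂)` and `f(a)(j₃) ∘ f(i₁)(b')` may be interchanged up to `~`. In the
other direction, every morphism `(a, b)` of `I × J` is both `(id, b) ≫ (a, id)` and
`(a, id) ≫ (id, b)`, so `f(a, b)` is related to both composites; this makes `B(f)(a)` a deformation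
and gives `A(B(f))(a, b) ~ f(a, b)`. Finally `B(A(f)) = f` on the nose, because lax functors
preserve identities strictly.
-/

open scoped CategoryTheory.Prod

namespace CatER

variable {X : Type*} [Category X] [CatER X] {A B C : X}

theorem rel_refl (f : A ⟶ B) : rel f f := equiv.refl f

theorem rel_of_eq {f g : A ⟶ B} (h : f = g) : rel f g := h ▸ rel_refl f

theorem rel_symm {f g : A ⟶ B} (h : rel f g) : rel g f := equiv.symm h

theorem rel_trans {f g h : A ⟶ B} (h₁ : rel f g) (h₂ : rel g h) : rel f h := equiv.trans h₁ h₂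

theorem rel_comp {f f' : A ⟶ B} {g g' : B ⟶ C} (hf : rel f f') (hg : rel g g') :
    rel (f ≫ g) (f' ≫ g') :=
  rel_trans (comp_right g hf) (comp_left f' hg)

end CatER

open CatER

section

variable {I : Type*} [Category I] {X : Type*} [Category X] [CatER X]

@[simp]
theorem Deformation.id_app (x : LaxFunctor I X) (i : I) : (𝟙 x : x ⟶ x).app i = 𝟙 (x.obj i) :=
  rfl

@[simp]
theorem Deformation.comp_app {x y z : LaxFunctor I X} (f : x ⟶ y) (g : y ⟶ z) (i : I) :
    (f ≫ g).app i = f.app i ≫ g.app i :=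
  rfl

theorem LaxFunctor.hext {x y : LaxFunctor I X} (hobj : ∀ i, x.obj i = y.obj i)
    (hmap : ∀ {i j : I} (a : i ⟶ j), x.map a ≍ y.map a) : x = y := by
  obtain ⟨xobj, xmap, _, _⟩ := x
  obtain ⟨yobj, ymap, _, _⟩ := y
  obtain rfl : xobj = yobj := funext hobj
  obtain rfl : @xmap = @ymap := by
    funext i j a
    exact eq_of_heq (hmap a)
  rfl

theorem Deformation.hext {x y x' y' : LaxFunctor I X} (hx : x = x') (hy : y = y')
    {d : x ⟶ y} {d' : x' ⟶ y'} (happ : ∀ i, d.app i ≍ d'.app i) : d ≍ d' := by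
  subst hx hy
  exact heq_of_eq (Deformation.ext' fun i => eq_of_heq (happ i))

end

namespace LaxFunctor

variable {I J : Type*} [Category I] [Category J] {X : Type*} [Category X] [CatER X]

theorem rel_map_mkHom_snd_fst (f : LaxFunctor (I × J) X) {i₁ i₂ : I} {j₁ j₂ : J}
    (a : i₁ ⟶ i₂) (b : j₁ ⟶ j₂) :
    rel (f.map (a ×ₘ b)) (f.map (𝟙 i₁ ×ₘ b) ≫ f.map (a ×ₘ 𝟙 j₂)) := by
  simpa using f.map_comp (𝟙 i₁ ×ₘ b) (a ×ₘ 𝟙 j₂)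

theorem rel_map_mkHom_fst_snd (f : LaxFunctor (I × J) X) {i₁ i₂ : I} {j₁ j₂ : J}
    (a : i₁ ⟶ i₂) (b : j₁ ⟶ j₂) :
    rel (f.map (a ×ₘ b)) (f.map (a ×ₘ 𝟙 j₁) ≫ f.map (𝟙 i₂ ×ₘ b)) := by
  simpa using f.map_comp (a ×ₘ 𝟙 j₁) (𝟙 i₂ ×ₘ b)

-- `uncurry`, `curry` (on lax functors and on deformations), `laxUncurry` and `laxCurry` are
-- reducible so that `simp` sees the definitional object equalities such as
-- `A(f)(i, j) = f(i)(j)`, and can turn `eqToHom` along them into `𝟙`.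
@[simps]
abbrev uncurry (f : LaxFunctor I (LaxFunctor J X)) : LaxFunctor (I × J) X where
  obj ij := (f.obj ij.1).obj ij.2
  map {ij ij'} m := (f.obj ij.1).map m.2 ≫ (f.map m.1).app ij'.2
  map_id ij := by simp [map_id]
  map_comp {ij₁ _ ij₃} m m' := by
    have split := rel_comp ((f.obj ij₁.1).map_comp m.2 m'.2) (f.map_comp m.1 m'.1 ij₃.2)
    have interchange := comp_left ((f.obj ij₁.1).map m.2)
      (comp_right ((f.map m'.1).app ij₃.2) ((f.map m.1).natural m'.2))
    simp only [Deformation.comp_app, Category.assoc] at split interchange ⊢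
    exact rel_trans split interchange

@[simps]
abbrev curryObj (f : LaxFunctor (I × J) X) (i : I) : LaxFunctor J X where
  obj j := f.obj (i, j)
  map b := f.map (𝟙 i ×ₘ b)
  map_id j := f.map_id (i, j)
  map_comp b b' := by simpa using f.map_comp (𝟙 i ×ₘ b) (𝟙 i ×ₘ b')

@[simps]
abbrev curry (f : LaxFunctor (I × J) X) : LaxFunctor I (LaxFunctor J X) where
  obj := f.curryObj
  map a :=
    { app j := f.map (a ×ₘ 𝟙 j)
      natural b :=
        rel_trans (rel_symm (f.rel_map_mkHom_snd_fst _ _)) (f.rel_map_mkHom_fst_snd _ _) }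
  map_id i := Deformation.ext' fun j => f.map_id (i, j)
  map_comp a a' j := by simpa using f.map_comp (a ×ₘ 𝟙 j) (a' ×ₘ 𝟙 j)

theorem curryObj_uncurry (f : LaxFunctor I (LaxFunctor J X)) (i : I) :
    f.uncurry.curryObj i = f.obj i :=
  hext (fun _ => rfl) fun _ => heq_of_eq (by simp [map_id])

theorem curry_uncurry (f : LaxFunctor I (LaxFunctor J X)) : f.uncurry.curry = f :=
  hext f.curryObj_uncurry fun _ => Deformation.hext (f.curryObj_uncurry _)
    (f.curryObj_uncurry _) fun _ => heq_of_eq (by simp [map_id])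

theorem rel_uncurry_curry_map (f : LaxFunctor (I × J) X) {ij ij' : I × J} (m : ij ⟶ ij') :
    rel (f.curry.uncurry.map m) (f.map m) :=
  rel_symm (f.rel_map_mkHom_snd_fst m.1 m.2)

/-- The component `Θ_f : A(B(f)) ⇒ f` of `Θ`. -/
def uncurryCurryHom (f : LaxFunctor (I × J) X) : f.curry.uncurry ⟶ f where
  app _ := 𝟙 _
  natural m := by simpa using f.rel_uncurry_curry_map m

end LaxFunctor

namespace Deformation

variable {I J : Type*} [Category I] [Category J] {X : Type*} [Category X] [CatER X]

@[simps]
abbrev uncurry {f g : LaxFunctor I (LaxFunctor J X)} (d : f ⟶ g) : f.uncurry ⟶ g.uncurry where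
  app ij := (d.app ij.1).app ij.2
  natural {ij ij'} m := by
    have h₁ := comp_left ((f.obj ij.1).map m.2) (d.natural m.1 ij'.2)
    have h₂ := comp_right ((g.map m.1).app ij'.2) ((d.app ij.1).natural m.2)
    simp only [comp_app, Category.assoc] at h₁ h₂ ⊢
    exact rel_trans h₁ h₂

@[simps]
abbrev curry {f g : LaxFunctor (I × J) X} (d : f ⟶ g) : f.curry ⟶ g.curry where
  app i :=
    { app j := d.app (i, j)
      natural b := d.natural (𝟙 i ×ₘ b) }
  natural a j := d.natural (a ×ₘ 𝟙 j)

theorem uncurry_curry_comp_uncurryCurryHom {f g : LaxFunctor (I × J) X} (d : f ⟶ g) :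
    d.curry.uncurry ≫ g.uncurryCurryHom = f.uncurryCurryHom ≫ d :=
  ext' fun _ => by simp [LaxFunctor.uncurryCurryHom]

end Deformation

section

variable (I J : Type*) [Category I] [Category J] (X : Type*) [Category X] [CatER X]

@[simps]
abbrev laxUncurry : LaxFunctor I (LaxFunctor J X) ⥤ LaxFunctor (I × J) X where
  obj := LaxFunctor.uncurry
  map := Deformation.uncurry

@[simps]
abbrev laxCurry : LaxFunctor (I × J) X ⥤ LaxFunctor I (LaxFunctor J X) where
  obj := LaxFunctor.curry
  map := Deformation.curry

theorem laxUncurry_comp_laxCurry : laxUncurry I J X ⋙ laxCurry I J X = 𝟭 _ :=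
  Functor.hext LaxFunctor.curry_uncurry fun f g _ =>
    Deformation.hext f.curry_uncurry g.curry_uncurry fun i =>
      Deformation.hext (f.curryObj_uncurry i) (g.curryObj_uncurry i) fun _ => .rfl

end

/-- the lax exponential law.  For small categories `I`, `J` and a
small category with equivalence relations `X`, the functors
`A : LAX(I, LAX(J, X)) → LAX(I × J, X)` and `B : LAX(I × J, X) → LAX(I, LAX(J, X))`
defined by `A(f)(i, j) = f(i)(j)`, `A(f)(a, b) = f(a)(j₂)∘f(i₁)(b)`,
`B(f)(i)(j) = f(i, j)`, `B(f)(a)(j) = f(a, id)`, `B(f)(i)(b) = f(id, b)` (and acting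
pointwise on deformations) are well defined, preserve the pointwise equivalence
relations, satisfy `B∘A = id`, and the identity morphisms define a deformation
`Θ : A∘B ⇒ id` relative to objects. -/
theorem stmt11 (I J : Type) [SmallCategory I] [SmallCategory J]
    (X : Type) [SmallCategory X] [CatER X] :
    ∃ (A : (LaxFunctor I (LaxFunctor J X)) ⥤ (LaxFunctor (I × J) X))
      (B : (LaxFunctor (I × J) X) ⥤ (LaxFunctor I (LaxFunctor J X)))
      (hAobj : ∀ (f : LaxFunctor I (LaxFunctor J X)) (ij : I × J),
        (A.obj f).obj ij = (f.obj ij.1).obj ij.2)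
      (hBobj : ∀ (f : LaxFunctor (I × J) X) (i : I) (j : J),
        ((B.obj f).obj i).obj j = f.obj (i, j)),
      -- the formula for `A` on morphisms of `I × J`
      (∀ (f : LaxFunctor I (LaxFunctor J X)) {i₁ i₂ : I} {j₁ j₂ : J}
          (a : i₁ ⟶ i₂) (b : j₁ ⟶ j₂),
        (A.obj f).map ((a, b) : (i₁, j₁) ⟶ (i₂, j₂)) =
          eqToHom (hAobj f (i₁, j₁)) ≫ (f.obj i₁).map b ≫ (f.map a).app j₂ ≫
            eqToHom (hAobj f (i₂, j₂)).symm) ∧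
      -- the formula for `A` on deformations
      (∀ (f g : LaxFunctor I (LaxFunctor J X)) (d : f ⟶ g) (i : I) (j : J),
        (A.map d).app (i, j) =
          eqToHom (hAobj f (i, j)) ≫ (d.app i).app j ≫ eqToHom (hAobj g (i, j)).symm) ∧
      -- the formulas for `B` on morphisms of `I` and of `J`
      (∀ (f : LaxFunctor (I × J) X) (i : I) {j₁ j₂ : J} (b : j₁ ⟶ j₂),
        ((B.obj f).obj i).map b =
          eqToHom (hBobj f i j₁) ≫ f.map ((𝟙 i, b) : (i, j₁) ⟶ (i, j₂)) ≫
            eqToHom (hBobj f i j₂).symm) ∧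
      (∀ (f : LaxFunctor (I × J) X) {i₁ i₂ : I} (a : i₁ ⟶ i₂) (j : J),
        ((B.obj f).map a).app j =
          eqToHom (hBobj f i₁ j) ≫ f.map ((a, 𝟙 j) : (i₁, j) ⟶ (i₂, j)) ≫
            eqToHom (hBobj f i₂ j).symm) ∧
      -- the formula for `B` on deformations
      (∀ (f g : LaxFunctor (I × J) X) (d : f ⟶ g) (i : I) (j : J),
        ((B.map d).app i).app j =
          eqToHom (hBobj f i j) ≫ d.app (i, j) ≫ eqToHom (hBobj g i j).symm) ∧
      -- `A` and `B` preserve the pointwise equivalence relations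
      (∀ (f g : LaxFunctor I (LaxFunctor J X)) (d₁ d₂ : f ⟶ g),
        CatER.rel d₁ d₂ → CatER.rel (A.map d₁) (A.map d₂)) ∧
      (∀ (f g : LaxFunctor (I × J) X) (d₁ d₂ : f ⟶ g),
        CatER.rel d₁ d₂ → CatER.rel (B.map d₁) (B.map d₂)) ∧
      -- `B ∘ A` is the identity
      A ⋙ B = 𝟭 (LaxFunctor I (LaxFunctor J X)) ∧
      -- `Θ : A∘B ⇒ id` is a deformation relative to objects, with identity components
      (∃ (hABobj : ∀ (f : LaxFunctor (I × J) X) (ij : I × J),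
            (A.obj (B.obj f)).obj ij = f.obj ij)
          (Θ : ∀ f : LaxFunctor (I × J) X, A.obj (B.obj f) ⟶ f),
        (∀ (f : LaxFunctor (I × J) X) (ij : I × J),
          (Θ f).app ij = eqToHom (hABobj f ij)) ∧
        (∀ (f : LaxFunctor (I × J) X) {ij ij' : I × J} (m : ij ⟶ ij'),
          CatER.rel ((A.obj (B.obj f)).map m)
            (eqToHom (hABobj f ij) ≫ f.map m ≫ eqToHom (hABobj f ij').symm)) ∧
        (∀ (f g : LaxFunctor (I × J) X) (d : f ⟶ g),
          CatER.rel (A.map (B.map d) ≫ Θ g) (Θ f ≫ d))) := by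
  refine ⟨laxUncurry I J X, laxCurry I J X, fun _ _ => rfl, fun _ _ _ => rfl,
    fun _ _ _ _ => by simp, fun _ _ _ _ _ => by simp, fun _ _ _ => by simp,
    fun _ _ _ => by simp, fun _ _ _ _ _ => by simp,
    fun _ _ _ _ h ij => h ij.1 ij.2, fun _ _ _ _ h i j => h (i, j),
    laxUncurry_comp_laxCurry I J X, fun _ _ => rfl, LaxFunctor.uncurryCurryHom,
    fun _ _ => rfl, fun f _ _ m => by simpa using f.rel_uncurry_curry_map m,
    fun _ _ d => rel_of_eq d.uncurry_curry_comp_uncurryCurryHom⟩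
end

section
/- Let I and J be small categories and X a small category with equivalence relations. Then there is an isomorphism of categories HOM(I, LAX(J, X)_strict)_strict ≅ LAX(J, HOM(I, X)_strict)_strict, natural in I, J and X, given by swapping arguments: a functor F : I → LAX(J, X)_strict corresponds to the lax functor J → HOM(I, X)_strict sending j to the functor i ↦ F(i)(j). -/
open CategoryTheory

/-- A strict deformation between lax functors: the naturality squares commute on the
nose. -/
structure StrictDef {I : Type*} [Category I] {X : Type*} [Category X] [CatER X]
    (x y : LaxFunctor I X) where
  app : ∀ i : I, x.obj i ⟶ y.obj i
  natural : ∀ {i j : I} (a : i ⟶ j), x.map a ≫ app j = app i ≫ y.map a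

namespace StrictDef

variable {I : Type*} [Category I] {X : Type*} [Category X] [CatER X]

theorem ext' : ∀ {x y : LaxFunctor I X} {f g : StrictDef x y},
    (∀ i, f.app i = g.app i) → f = g
  | _, _, ⟨a, _⟩, ⟨b, _⟩, h => by
    obtain rfl : a = b := funext h
    rfl

end StrictDef

/-- The category `LAX(I, X)_strict` of lax functors and strict deformations. -/
instance LaxStrictCat (I : Type*) [Category I] (X : Type*) [Category X] [CatER X] :
    Category (LaxFunctor I X) where
  Hom := StrictDef
  id x := ⟨fun i => 𝟙 (x.obj i), fun a => by simp⟩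
  comp f g := ⟨fun i => f.app i ≫ g.app i, fun a => by
    rw [← Category.assoc, f.natural, Category.assoc, g.natural, Category.assoc]⟩
  id_comp f := StrictDef.ext' (fun i => Category.id_comp (f.app i))
  comp_id f := StrictDef.ext' (fun i => Category.comp_id (f.app i))
  assoc f g h := StrictDef.ext' (fun i => Category.assoc _ _ _)

/-- `LAX(I, X)_strict` carries the pointwise equivalence relations. -/
instance LaxStrictCatER (I : Type*) [Category I] (X : Type*) [Category X] [CatER X] :
    CatER (LaxFunctor I X) where
  rel f g := ∀ i, CatER.rel (f.app i) (g.app i)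
  equiv :=
    ⟨fun _ _ => CatER.equiv.refl _, fun h i => CatER.equiv.symm (h i),
      fun h₁ h₂ i => CatER.equiv.trans (h₁ i) (h₂ i)⟩
  comp_left := fun {A B C} a {x y} h i => CatER.comp_left _ (h i)
  comp_right := fun {A B C} {x y} b h i => CatER.comp_right _ (h i)

/-- `HOM(I, X)_strict`, the ordinary functor category, carries the pointwise
equivalence relations. -/
instance FunctorCatER (I : Type*) [Category I] (X : Type*) [Category X] [CatER X] :
    CatER (I ⥤ X) where
  rel f g := ∀ i, CatER.rel (f.app i) (g.app i)
  equiv :=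
    ⟨fun _ _ => CatER.equiv.refl _, fun h i => CatER.equiv.symm (h i),
      fun h₁ h₂ i => CatER.equiv.trans (h₁ i) (h₂ i)⟩
  comp_left := fun {A B C} a {x y} h i => CatER.comp_left _ (h i)
  comp_right := fun {A B C} {x y} b h i => CatER.comp_right _ (h i)

/-! Both categories consist of doubly indexed families `x i j`, strictly functorial in `i`,
functorial up to `~` in `j`, with the maps in the two directions commuting on the nose. Each
condition is imposed pointwise in the other index, so swapping the indices gives functors in both
directions, mutually inverse by structure eta; the equivalence relations are pointwise on both
sides, hence preserved. -/

namespace LaxFunctor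

variable {I J X : Type*} [Category I] [Category J] [Category X] [CatER X]

@[ext]
theorem hom_ext {x y : LaxFunctor I X} {f g : x ⟶ y} (h : ∀ i, f.app i = g.app i) : f = g :=
  StrictDef.ext' h

def unflip (F : I ⥤ LaxFunctor J X) : LaxFunctor J (I ⥤ X) where
  obj j :=
    { obj i := (F.obj i).obj j
      map a := (F.map a).app j }
  map b :=
    { app i := (F.obj i).map b
      naturality _ _ a := ((F.map a).natural b).symm }
  map_id j := by ext i; exact (F.obj i).map_id j
  map_comp b b' i := (F.obj i).map_comp b b'

def unflipFunctor : (I ⥤ LaxFunctor J X) ⥤ LaxFunctor J (I ⥤ X) where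
  obj := unflip
  map η :=
    { app j :=
        { app i := (η.app i).app j
          naturality _ _ a := congrArg (StrictDef.app · j) (η.naturality a) }
      natural b := by ext i; exact (η.app i).natural b }

theorem unflipFunctor_map_rel {F G : I ⥤ LaxFunctor J X} {η θ : F ⟶ G}
    (h : CatER.rel η θ) : CatER.rel (unflipFunctor.map η) (unflipFunctor.map θ) :=
  fun j i => h i j

def flip (G : LaxFunctor J (I ⥤ X)) : I ⥤ LaxFunctor J X where
  obj i :=
    { obj j := (G.obj j).obj i
      map b := (G.map b).app i
      map_id j := by simp [G.map_id]
      map_comp b b' := G.map_comp b b' i }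
  map a :=
    { app j := (G.obj j).map a
      natural b := ((G.map b).naturality a).symm }

def flipFunctor : LaxFunctor J (I ⥤ X) ⥤ (I ⥤ LaxFunctor J X) where
  obj := flip
  map η :=
    { app i :=
        { app j := (η.app j).app i
          natural b := congrArg (NatTrans.app · i) (η.natural b) }
      naturality _ _ a := by ext j; exact (η.app j).naturality a }

theorem flipFunctor_map_rel {F G : LaxFunctor J (I ⥤ X)} {η θ : F ⟶ G}
    (h : CatER.rel η θ) : CatER.rel (flipFunctor.map η) (flipFunctor.map θ) :=
  fun i j => h j i

theorem flipFunctor_comp_unflipFunctor :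
    flipFunctor ⋙ unflipFunctor = 𝟭 (LaxFunctor J (I ⥤ X)) :=
  rfl

theorem unflipFunctor_comp_flipFunctor :
    unflipFunctor ⋙ flipFunctor = 𝟭 (I ⥤ LaxFunctor J X) :=
  rfl

end LaxFunctor

/-- For small categories `I`, `J` and a small category with
equivalence relations `X`, there is an isomorphism of categories
`HOM(I, LAX(J, X)_strict)_strict ≅ LAX(J, HOM(I, X)_strict)_strict`, given by swapping
arguments: a functor `F : I → LAX(J, X)_strict` corresponds to the lax functor
`J → HOM(I, X)_strict` sending `j` to the functor `i ↦ F(i)(j)`. -/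
theorem stmt12 (I J : Type) [SmallCategory I] [SmallCategory J]
    (X : Type) [SmallCategory X] [CatER X] :
    ∃ (Φ : (I ⥤ LaxFunctor J X) ⥤ LaxFunctor J (I ⥤ X))
      (Ψ : LaxFunctor J (I ⥤ X) ⥤ (I ⥤ LaxFunctor J X))
      (hobj : ∀ (F : I ⥤ LaxFunctor J X) (j : J) (i : I),
        ((Φ.obj F).obj j).obj i = (F.obj i).obj j),
      Φ ⋙ Ψ = 𝟭 (I ⥤ LaxFunctor J X) ∧
      Ψ ⋙ Φ = 𝟭 (LaxFunctor J (I ⥤ X)) ∧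
      -- `Φ(F)(j)` acts on morphisms of `I` by `a ↦ F(a)(j)`
      (∀ (F : I ⥤ LaxFunctor J X) (j : J) {i i' : I} (a : i ⟶ i'),
        ((Φ.obj F).obj j).map a =
          eqToHom (hobj F j i) ≫ (F.map a).app j ≫ eqToHom (hobj F j i').symm) ∧
      -- `Φ(F)` acts on morphisms of `J` by `(b : j ⟶ j') ↦ (i ↦ F(i)(b))`
      (∀ (F : I ⥤ LaxFunctor J X) {j j' : J} (b : j ⟶ j') (i : I),
        ((Φ.obj F).map b).app i =
          eqToHom (hobj F j i) ≫ (F.obj i).map b ≫ eqToHom (hobj F j' i).symm) ∧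
      -- `Φ` acts on morphisms by swapping indices as well
      (∀ (F G : I ⥤ LaxFunctor J X) (η : F ⟶ G) (j : J) (i : I),
        ((Φ.map η).app j).app i =
          eqToHom (hobj F j i) ≫ (η.app i).app j ≫ eqToHom (hobj G j i).symm) ∧
      -- `Φ` and `Ψ` preserve the pointwise equivalence relations
      (∀ (F G : I ⥤ LaxFunctor J X) (η θ : F ⟶ G),
        (∀ i, CatER.rel (η.app i) (θ.app i)) → CatER.rel (Φ.map η) (Φ.map θ)) ∧
      (∀ (F G : LaxFunctor J (I ⥤ X)) (η θ : F ⟶ G),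
        CatER.rel η θ → ∀ i : I, CatER.rel ((Ψ.map η).app i) ((Ψ.map θ).app i)) := by
  refine ⟨LaxFunctor.unflipFunctor, LaxFunctor.flipFunctor, fun _ _ _ => rfl,
    LaxFunctor.unflipFunctor_comp_flipFunctor, LaxFunctor.flipFunctor_comp_unflipFunctor,
    ?_, ?_, ?_, fun _ _ _ _ => LaxFunctor.unflipFunctor_map_rel,
    fun _ _ _ _ => LaxFunctor.flipFunctor_map_rel⟩
  -- `hobj` holds by `rfl`, so all the `eqToHom`s are identities.
  all_goals
    intros
    exact ((Category.id_comp _).trans (Category.comp_id _)).symm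
end

section
/- Let X be a small category with equivalence relations and n a natural number. Let M_n(X) be the category whose objects are lax functors Y : [n] × [n] → X such that (i) Y(i, s) = Y(i, t) and Y(id_i, s ≤ t) = id for all i and all s ≤ t, and (ii) for all 0 ≤ s ≤ n−1 and all j, the morphism Y_{s,j} := Y(s ≤ s+1, id_j) is an isomorphism; and whose morphisms are deformations f with f(i, s) = f(i, t) for all i, s ≤ t, and such that f(s+1, j)∘Y_{s,j} = Y'_{s,j}∘f(s, j) for all s, j. Let M'_n(X) be the full subcategory of M_n(X) on those Y with Y(i, j) = Y(s, t) for all 0 ≤ i, j, s, t ≤ n. Then the inclusion M'_n(X) ↪ M_n(X) is essentially surjective: every object Y of M_n(X) is isomorphic in M_n(X) to the object Z of M'_n(X) defined by Z(i, j) = Y(0, 0), with structure morphisms given by conjugating those of Y by the composites Y_{i−1,0}∘Y_{i−2,0}∘⋯∘Y_{0,0}, via the isomorphism f : Z → Y with f(i, j) = Y_{i−1,0}∘Y_{i−2,0}∘⋯∘Y_{0,0}. -/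
open CategoryTheory

/-- The square category `[n] × [n]`, where `[n] = {0 < 1 < ⋯ < n}`. -/
abbrev Sq (n : ℕ) : Type := Fin (n + 1) × Fin (n + 1)

/-- The generating step morphism `s ⟶ s+1` in `[n]`. -/
def step {n : ℕ} (s : ℕ) (hs : s + 1 < n + 1) :
    (⟨s, Nat.lt_of_succ_lt hs⟩ : Fin (n + 1)) ⟶ (⟨s + 1, hs⟩ : Fin (n + 1)) :=
  homOfLE (by simp [Fin.mk_le_mk])

/-- Membership in the category `M_n(X)`: a lax functor `Y : [n] × [n] → X` such that
(i) `Y(i, s) = Y(i, t)` with `Y(id_i, s ≤ t) = id` for all `i` and `s ≤ t`, and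
(ii) all the morphisms `Y_{s,j} = Y(s ≤ s+1, id_j)` are isomorphisms. -/
structure MemM {n : ℕ} {X : Type} [SmallCategory X] [CatER X]
    (Y : LaxFunctor (Sq n) X) : Prop where
  const : ∀ i s t : Fin (n + 1), Y.obj (i, s) = Y.obj (i, t)
  idmap : ∀ (i : Fin (n + 1)) {s t : Fin (n + 1)} (h : s ≤ t),
    Y.map ((𝟙 i, homOfLE h) : ((i, s) : Sq n) ⟶ (i, t)) = eqToHom (const i s t)
  iso : ∀ (s : ℕ) (hs : s + 1 < n + 1) (j : Fin (n + 1)),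
    IsIso (Y.map ((step s hs, 𝟙 j) :
      ((⟨s, Nat.lt_of_succ_lt hs⟩, j) : Sq n) ⟶ (⟨s + 1, hs⟩, j)))

/-- Membership in `M_n(X)` for a deformation `f` between objects of `M_n(X)`:
`f(i, s) = f(i, t)` for all `s ≤ t`, and `f` commutes strictly with the structure
isomorphisms `Y_{s,j}`. -/
structure MemMHom {n : ℕ} {X : Type} [SmallCategory X] [CatER X]
    {Z Y : LaxFunctor (Sq n) X} (hZ : MemM Z) (hY : MemM Y)
    (f : Deformation Z Y) : Prop where
  const : ∀ i s t : Fin (n + 1),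
    f.app (i, s) = eqToHom (hZ.const i s t) ≫ f.app (i, t) ≫ eqToHom (hY.const i s t).symm
  strict : ∀ (s : ℕ) (hs : s + 1 < n + 1) (j : Fin (n + 1)),
    Z.map ((step s hs, 𝟙 j) :
        ((⟨s, Nat.lt_of_succ_lt hs⟩, j) : Sq n) ⟶ (⟨s + 1, hs⟩, j)) ≫
      f.app (⟨s + 1, hs⟩, j) =
    f.app (⟨s, Nat.lt_of_succ_lt hs⟩, j) ≫
      Y.map ((step s hs, 𝟙 j) :
        ((⟨s, Nat.lt_of_succ_lt hs⟩, j) : Sq n) ⟶ (⟨s + 1, hs⟩, j))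

/-- The composite `Y_{m-1,0} ∘ Y_{m-2,0} ∘ ⋯ ∘ Y_{0,0} : Y(0,0) ⟶ Y(m,0)`. -/
def chain {n : ℕ} {X : Type} [SmallCategory X] [CatER X] (Y : LaxFunctor (Sq n) X) :
    ∀ (m : ℕ) (hm : m < n + 1),
      (Y.obj (⟨0, Nat.succ_pos n⟩, ⟨0, Nat.succ_pos n⟩) ⟶ Y.obj (⟨m, hm⟩, ⟨0, Nat.succ_pos n⟩))
  | 0, _ => 𝟙 _
  | m + 1, h =>
    chain Y m (Nat.lt_of_succ_lt h) ≫
      Y.map ((step m h, 𝟙 (⟨0, Nat.succ_pos n⟩ : Fin (n + 1))) :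
        ((⟨m, Nat.lt_of_succ_lt h⟩, ⟨0, Nat.succ_pos n⟩) : Sq n) ⟶
          (⟨m + 1, h⟩, ⟨0, Nat.succ_pos n⟩))

section Transport

variable {I : Type*} [Category I] {X : Type*} [Category X] [CatER X]

def Deformation.ofStrict {x y : LaxFunctor I X} (app : ∀ i, x.obj i ⟶ y.obj i)
    (strict : ∀ {i j : I} (a : i ⟶ j), x.map a ≫ app j = app i ≫ y.map a) :
    Deformation x y where
  app := app
  natural a := by rw [strict a]; exact CatER.equiv.refl _

namespace LaxFunctor

-- Reducible, so that `(Y.transport A φ).obj i` and `A i` are identified when rewriting composites.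
abbrev transport (Y : LaxFunctor I X) (A : I → X) (φ : ∀ i, A i ≅ Y.obj i) :
    LaxFunctor I X where
  obj := A
  map {i j} a := (φ i).hom ≫ Y.map a ≫ (φ j).inv
  map_id i := by simp [Y.map_id]
  map_comp {i j k} a b := by
    have h : ((φ i).hom ≫ Y.map a ≫ (φ j).inv) ≫ (φ j).hom ≫ Y.map b ≫ (φ k).inv =
        (φ i).hom ≫ (Y.map a ≫ Y.map b) ≫ (φ k).inv := by simp
    rw [h]
    exact CatER.comp_left _ (CatER.comp_right _ (Y.map_comp a b))

variable (Y : LaxFunctor I X) (A : I → X) (φ : ∀ i, A i ≅ Y.obj i)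

theorem transport_map {i j : I} (a : i ⟶ j) :
    (Y.transport A φ).map a = (φ i).hom ≫ Y.map a ≫ (φ j).inv := rfl

theorem transport_map_comp_hom {i j : I} (a : i ⟶ j) :
    (Y.transport A φ).map a ≫ (φ j).hom = (φ i).hom ≫ Y.map a := by
  simp

theorem map_comp_inv_transport {i j : I} (a : i ⟶ j) :
    Y.map a ≫ (φ j).inv = (φ i).inv ≫ (Y.transport A φ).map a := by
  simp

def transportHom : Deformation (Y.transport A φ) Y :=
  Deformation.ofStrict (fun i => (φ i).hom) (transport_map_comp_hom Y A φ)

@[simp]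
theorem transportHom_app (i : I) : (Y.transportHom A φ).app i = (φ i).hom := rfl

def transportInv : Deformation Y (Y.transport A φ) :=
  Deformation.ofStrict (fun i => (φ i).inv) (map_comp_inv_transport Y A φ)

@[simp]
theorem transportInv_app (i : I) : (Y.transportInv A φ).app i = (φ i).inv := rfl

end LaxFunctor

end Transport

section SquareCategory

variable {n : ℕ} {X : Type} [SmallCategory X] [CatER X] {Y : LaxFunctor (Sq n) X}

open LaxFunctor

theorem MemM.transport (hY : MemM Y) {A : Sq n → X} (hA : ∀ i s t, A (i, s) = A (i, t))
    (φ : ∀ ij, A ij ≅ Y.obj ij)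
    (hφ : ∀ i s t,
      (φ (i, s)).hom ≫ eqToHom (hY.const i s t) = eqToHom (hA i s t) ≫ (φ (i, t)).hom) :
    MemM (Y.transport A φ) where
  const := hA
  idmap i s t h := by
    rw [transport_map, hY.idmap i h, reassoc_of% hφ i s t, Iso.hom_inv_id, Category.comp_id]
  iso s hs j := by
    have := hY.iso s hs j
    rw [transport_map]
    infer_instance

theorem MemMHom.transportHom (hY : MemM Y) {A : Sq n → X} (hA : ∀ i s t, A (i, s) = A (i, t))
    (φ : ∀ ij, A ij ≅ Y.obj ij)
    (hφ : ∀ i s t,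
      (φ (i, s)).hom ≫ eqToHom (hY.const i s t) = eqToHom (hA i s t) ≫ (φ (i, t)).hom) :
    MemMHom (hY.transport hA φ hφ) hY (Y.transportHom A φ) where
  const i s t := by
    rw [transportHom_app, transportHom_app, ← reassoc_of% hφ i s t, eqToHom_trans, eqToHom_refl,
      Category.comp_id]
  strict s hs j := transport_map_comp_hom Y A φ _

theorem MemMHom.transportInv (hY : MemM Y) {A : Sq n → X} (hA : ∀ i s t, A (i, s) = A (i, t))
    (φ : ∀ ij, A ij ≅ Y.obj ij)
    (hφ : ∀ i s t,
      (φ (i, s)).hom ≫ eqToHom (hY.const i s t) = eqToHom (hA i s t) ≫ (φ (i, t)).hom) :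
    MemMHom hY (hY.transport hA φ hφ) (Y.transportInv A φ) where
  const i s t := by
    rw [transportInv_app, transportInv_app]
    refine Iso.inv_ext ?_
    rw [reassoc_of% hφ i s t]
    simp
  strict s hs j := map_comp_inv_transport Y A φ _

theorem isIso_chain (hY : MemM Y) : ∀ (m : ℕ) (hm : m < n + 1), IsIso (chain Y m hm)
  | 0, _ => by rw [chain]; infer_instance
  | m + 1, hm => by
    have := isIso_chain hY m (Nat.lt_of_succ_lt hm)
    have := hY.iso m hm ⟨0, Nat.succ_pos n⟩
    rw [chain]
    infer_instance

noncomputable def chainIso (hY : MemM Y) (ij : Sq n) :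
    Y.obj (⟨0, Nat.succ_pos n⟩, ⟨0, Nat.succ_pos n⟩) ≅ Y.obj ij :=
  haveI := isIso_chain hY ij.1.1 ij.1.2
  asIso (chain Y ij.1.1 ij.1.2 ≫ eqToHom (hY.const ij.1 ⟨0, Nat.succ_pos n⟩ ij.2))

theorem chainIso_hom_comp_eqToHom (hY : MemM Y) (i s t : Fin (n + 1)) :
    (chainIso hY (i, s)).hom ≫ eqToHom (hY.const i s t) = (chainIso hY (i, t)).hom := by
  simp only [chainIso, asIso_hom, Category.assoc, eqToHom_trans]

end SquareCategory

/-- **Statement 15.**  The inclusion `M'_n(X) ↪ M_n(X)` is essentially surjective: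
every object `Y` of `M_n(X)` is isomorphic, in `M_n(X)`, to the object `Z` of `M'_n(X)`
with constant value `Y(0,0)`, whose structure morphisms are the conjugates of those of
`Y` by the composites `Y_{i-1,0}∘⋯∘Y_{0,0}`, via the isomorphism `f : Z ⟶ Y` with
`f(i, j) = Y_{i-1,0}∘⋯∘Y_{0,0}`. -/
theorem stmt15 (n : ℕ) (X : Type) [SmallCategory X] [CatER X]
    (Y : LaxFunctor (Sq n) X) (hY : MemM Y) :
    ∃ (Z : LaxFunctor (Sq n) X) (hZ : MemM Z)
      (hZobj : ∀ ij : Sq n, Z.obj ij = Y.obj (⟨0, Nat.succ_pos n⟩, ⟨0, Nat.succ_pos n⟩))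
      (f : Deformation Z Y) (g : Deformation Y Z),
      -- `Z` lies in `M'_n(X)`:
      (∀ ij ij' : Sq n, Z.obj ij = Z.obj ij') ∧
      -- `f` and `g` are mutually inverse morphisms of `M_n(X)`:
      MemMHom hZ hY f ∧ MemMHom hY hZ g ∧
      (∀ ij : Sq n, f.app ij ≫ g.app ij = 𝟙 (Z.obj ij)) ∧
      (∀ ij : Sq n, g.app ij ≫ f.app ij = 𝟙 (Y.obj ij)) ∧
      -- the components of `f` are the prescribed composites:
      (∀ i j : Fin (n + 1),
        f.app (i, j) =
          eqToHom (hZobj (i, j)) ≫ chain Y i.1 i.2 ≫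
            eqToHom (hY.const i ⟨0, Nat.succ_pos n⟩ j)) ∧
      -- the structure morphisms of `Z` are the conjugates of those of `Y` by `f`:
      (∀ (ij ij' : Sq n) (m : ij ⟶ ij'), Z.map m ≫ f.app ij' = f.app ij ≫ Y.map m) := by
  let A : Sq n → X := fun _ => Y.obj (⟨0, Nat.succ_pos n⟩, ⟨0, Nat.succ_pos n⟩)
  have hA : ∀ i s t : Fin (n + 1), A (i, s) = A (i, t) := fun _ _ _ => rfl
  have hφ : ∀ i s t, (chainIso hY (i, s)).hom ≫ eqToHom (hY.const i s t) =
      eqToHom (hA i s t) ≫ (chainIso hY (i, t)).hom := fun i s t =>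
    (chainIso_hom_comp_eqToHom hY i s t).trans (Category.id_comp _).symm
  refine ⟨Y.transport A (chainIso hY), hY.transport hA _ hφ, fun _ => rfl,
    Y.transportHom A (chainIso hY), Y.transportInv A (chainIso hY), fun _ _ => rfl,
    MemMHom.transportHom hY hA _ hφ, MemMHom.transportInv hY hA _ hφ,
    fun ij => (chainIso hY ij).hom_inv_id, fun ij => (chainIso hY ij).inv_hom_id,
    fun i j => (Category.id_comp _).symm, fun _ _ => Y.transport_map_comp_hom A _⟩
end
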